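/- arXiv:1111.1863 — 3 statements merged into one kernel-verified Lean document; each statement's English description precedes it below -/
import Mathlib

section
/- Let S be a numerical semigroup generated by a generalized arithmetic sequence, i.e. S = ⟨m, hm+d, hm+2d, ..., hm+ld⟩ where m ≥ 2, h ≥ 1, d ≥ 1, gcd(m,d) = 1 and 1 ≤ l ≤ m−2. Then S satisfies Wilf's conjecture, i.e. f(S) + 1 ≤ n(S)·ν(S). -/
/-
Every element of `S = ⟨m, hm + d, …, hm + ld⟩` is `a·m + B·hm + K·d` with `K ≤ l·B`. As `d` is a
unit modulo `m`, every residue class modulo `m` is the class of `k·d` for a unique `k < m`, and the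
least element of `S` in it is `w(k) = ⌈k/l⌉·hm + k·d`. Hence `f(S) = w(m-1) - m`, and the elements
`w(k) + j·m` below `f(S)` give
`n(S) ≥ h·∑_{k<m} (⌈(m-1)/l⌉ - ⌈k/l⌉) + ∑_{k<m} ⌊k·d/m⌋ = h·∑_{t<q} (l·t + 1) + (m-1)(d-1)/2`
with `q = ⌈(m-1)/l⌉`. The generators `m` and `w(i) = hm + i·d` (`1 ≤ i ≤ l`) are indecomposable,
so `ν(S) ≥ l + 1`, and Wilf's inequality reduces to an elementary estimate using `m ≤ q·l + 1`.
-/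

/-- A numerical semigroup: an additive submonoid of `ℕ` (containing `0`, closed under
addition) whose complement in `ℕ` is finite. -/
structure NumericalSemigroup where
  carrier : Set ℕ
  zero_mem : 0 ∈ carrier
  add_mem : ∀ ⦃a b : ℕ⦄, a ∈ carrier → b ∈ carrier → a + b ∈ carrier
  cofinite : (carrierᶜ : Set ℕ).Finite

namespace NumericalSemigroup

/-- The multiplicity `m(S)`: the smallest positive element of `S`. -/
noncomputable def mult (S : NumericalSemigroup) : ℕ :=
  sInf {s : ℕ | s ∈ S.carrier ∧ 0 < s}

/-- The embedding dimension `ν(S)`: the cardinality of the (unique) minimal system of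
generators of `S`, i.e. the least cardinality of a generating set. -/
noncomputable def embdim (S : NumericalSemigroup) : ℕ :=
  sInf {n : ℕ | ∃ G : Finset ℕ,
    S.carrier = (AddSubmonoid.closure (G : Set ℕ) : Set ℕ) ∧ G.card = n}

/-- The Frobenius number `f(S)`: the largest integer not belonging to `S`. -/
noncomputable def frob (S : NumericalSemigroup) : ℤ :=
  sSup {x : ℤ | ∀ s ∈ S.carrier, (s : ℤ) ≠ x}

/-- `n(S)`: the number of elements of `S` smaller than the Frobenius number. -/
noncomputable def small (S : NumericalSemigroup) : ℕ :=
  {s : ℕ | s ∈ S.carrier ∧ (s : ℤ) < S.frob}.ncard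

/-- The type `t(S)`: the number of pseudo-Frobenius numbers of `S`, i.e. integers
`x ∉ S` such that `x + s ∈ S` for every nonzero `s ∈ S`. -/
noncomputable def typ (S : NumericalSemigroup) : ℕ :=
  {x : ℤ | (∀ s ∈ S.carrier, (s : ℤ) ≠ x) ∧
    ∀ s ∈ S.carrier, 0 < s → ∃ u ∈ S.carrier, (u : ℤ) = x + s}.ncard

/-- The `k`-th interval `I_k = [k·m, (k+1)·m - 1]` (for a given `m`). -/
def interval (m k : ℕ) : Set ℕ := Set.Ico (k * m) ((k + 1) * m)

/-- `n_k`: the number of elements of `S ∩ I_k` smaller than the Frobenius number. -/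
noncomputable def nk (S : NumericalSemigroup) (k : ℕ) : ℕ :=
  {s : ℕ | s ∈ S.carrier ∩ interval S.mult k ∧ (s : ℤ) < S.frob}.ncard

/-- `L = ⌊f(S)/m(S)⌋`. -/
noncomputable def Lindex (S : NumericalSemigroup) : ℤ := S.frob / (S.mult : ℤ)

/-- `ρ = f(S) + 1 - L·m(S)`. -/
noncomputable def rho (S : NumericalSemigroup) : ℤ :=
  S.frob + 1 - S.Lindex * (S.mult : ℤ)

/-- The Apéry set `Ap(S) = {w ∈ S : w - m(S) ∉ S}`. -/
def apery (S : NumericalSemigroup) : Set ℕ :=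
  {w : ℕ | w ∈ S.carrier ∧ ∀ u ∈ S.carrier, u + S.mult ≠ w}

theorem apery_finite (S : NumericalSemigroup) : S.apery.Finite := by
  apply Set.Finite.subset ((Set.finite_Iio S.mult).union (S.cofinite.image (· + S.mult)))
  intro x hx
  by_cases h : x < S.mult
  · exact Or.inl h
  · refine Or.inr ⟨x - S.mult, fun hmem => hx.2 _ hmem (by omega), ?_⟩
    show x - S.mult + S.mult = x
    omega

/-- `w j`: the `(j+1)`-st smallest element of the Apéry set, so that
`Ap(S) = {w 0 < w 1 < ... < w (m-1)}` with `w 0 = 0`. -/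
noncomputable def w (S : NumericalSemigroup) (j : ℕ) : ℕ :=
  (S.apery_finite.toFinset.sort (· ≤ ·)).getD j 0

/-- `ε_j`: the number of `k ∈ {0, ..., L-1}` such that `|I_k ∩ S| = j`. -/
noncomputable def eps (S : NumericalSemigroup) (j : ℕ) : ℕ :=
  {k : ℕ | (k : ℤ) < S.Lindex ∧ (S.carrier ∩ interval S.mult k).ncard = j}.ncard

/-- `η_j`: the number of `k ∈ ℕ` such that `|I_k ∩ S| = j`. -/
noncomputable def eta (S : NumericalSemigroup) (j : ℕ) : ℕ :=
  {k : ℕ | (S.carrier ∩ interval S.mult k).ncard = j}.ncard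

end NumericalSemigroup

section ResidueIndex

variable {m d : ℕ}

/-- For `d` coprime to `m`, the unique `k < m` with `k * d ≡ x [MOD m]`. -/
def residueIndex (m d x : ℕ) : ℕ := ((x : ZMod m) * (d : ZMod m)⁻¹).val

lemma residueIndex_add_mul_self_right (x j : ℕ) :
    residueIndex m d (x + j * m) = residueIndex m d x := by
  simp [residueIndex]

lemma residueIndex_add_le (x y : ℕ) :
    residueIndex m d (x + y) ≤ residueIndex m d x + residueIndex m d y := by
  simpa only [residueIndex, Nat.cast_add, add_mul] using ZMod.val_add_le _ _

lemma residueIndex_mul (hd : d.Coprime m) (k : ℕ) : residueIndex m d (k * d) = k % m := by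
  rw [residueIndex, Nat.cast_mul, mul_assoc, ZMod.coe_mul_inv_eq_one d hd, mul_one,
    ZMod.val_natCast]

variable [NeZero m]

lemma residueIndex_lt (x : ℕ) : residueIndex m d x < m := ZMod.val_lt _

lemma residueIndex_eq_iff (hd : d.Coprime m) {x y : ℕ} :
    residueIndex m d x = residueIndex m d y ↔ x ≡ y [MOD m] := by
  rw [← ZMod.natCast_eq_natCast_iff, residueIndex, residueIndex, (ZMod.val_injective m).eq_iff]
  exact (ZMod.unitOfCoprime d hd)⁻¹.isUnit.mul_left_inj

lemma residueIndex_mul_modEq (hd : d.Coprime m) (x : ℕ) :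
    residueIndex m d x * d ≡ x [MOD m] := by
  rw [← residueIndex_eq_iff hd, residueIndex_mul hd, Nat.mod_eq_of_lt (residueIndex_lt x)]

end ResidueIndex

namespace Nat

lemma ceilDiv_pos {k l : ℕ} (hl : 0 < l) : 0 < k ⌈/⌉ l ↔ 0 < k := by
  simp only [Nat.pos_iff_ne_zero, ne_eq, ← Nat.le_zero, ceilDiv_le_iff_le_mul hl, mul_zero]

lemma add_self_ceilDiv {k l : ℕ} (hl : 0 < l) : (k + l) ⌈/⌉ l = k ⌈/⌉ l + 1 := by
  rw [ceilDiv_eq_add_pred_div, ceilDiv_eq_add_pred_div, show k + l + l - 1 = k + l - 1 + l by omega,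
    Nat.add_div_right _ hl]

end Nat

section Indecomposable

variable {M : Type*} [AddMonoid M]

def AddSubmonoid.Indecomposable (S : AddSubmonoid M) (x : M) : Prop :=
  x ∈ S ∧ x ≠ 0 ∧ ∀ a ∈ S, ∀ b ∈ S, a + b = x → a = 0 ∨ b = 0

lemma AddSubmonoid.Indecomposable.mem {G : Set M} {x : M}
    (hx : (AddSubmonoid.closure G).Indecomposable x) : x ∈ G := by
  have key (y : M) (hy : y ∈ AddSubmonoid.closure G) : y = 0 ∨ y ∈ G ∨
      ∃ a ∈ AddSubmonoid.closure G, ∃ b ∈ AddSubmonoid.closure G, a ≠ 0 ∧ b ≠ 0 ∧ a + b = y := by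
    induction hy using AddSubmonoid.closure_induction with
    | mem y hy => exact Or.inr (Or.inl hy)
    | zero => exact Or.inl rfl
    | add a b ha hb iha ihb =>
      by_cases ha0 : a = 0
      · simpa [ha0] using ihb
      by_cases hb0 : b = 0
      · simpa [hb0] using iha
      exact Or.inr (Or.inr ⟨a, ha, b, hb, ha0, hb0, rfl⟩)
  obtain ⟨hxS, hx0, hirr⟩ := hx
  rcases key x hxS with h | h | ⟨a, ha, b, hb, ha0, hb0, rfl⟩
  · exact absurd h hx0
  · exact h
  · exact ((hirr a ha b hb rfl).elim ha0 hb0).elim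

end Indecomposable

section Sums

open Finset

lemma two_mul_sum_mul_div_add {m d : ℕ} [NeZero m] (hd : d.Coprime m) :
    2 * ∑ k ∈ range m, k * d / m + (m - 1) = (m - 1) * d := by
  -- sum `k * d = m * (k * d / m) + k * d % m`, where `k ↦ k * d % m` permutes `range m`
  have hperm : ∑ k ∈ range m, k * d % m = ∑ k ∈ range m, k :=
    sum_nbij' (· * d % m) (residueIndex m d) (fun k _ => mem_range.2 (Nat.mod_lt _ (NeZero.pos m)))
      (fun r _ => mem_range.2 (residueIndex_lt r))
      (fun k hk => by
        rw [residueIndex_eq_iff hd |>.2 (Nat.mod_modEq _ _), residueIndex_mul hd,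
          Nat.mod_eq_of_lt (mem_range.1 hk)])
      (fun r hr => Eq.trans (residueIndex_mul_modEq hd r) (Nat.mod_eq_of_lt (mem_range.1 hr)))
      (fun _ _ => rfl)
  have hsplit : (∑ k ∈ range m, k) * d = m * ∑ k ∈ range m, k * d / m + ∑ k ∈ range m, k := by
    rw [sum_mul, ← hperm, mul_sum, ← sum_add_distrib]
    exact sum_congr rfl fun k _ => (Nat.div_add_mod _ _).symm
  have hgauss := sum_range_id_mul_two m
  refine Nat.eq_of_mul_eq_mul_left (NeZero.pos m) ?_
  nlinarith [hsplit, hgauss]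

lemma sum_ceilDiv_sub (l m : ℕ) (hl : 0 < l) :
    ∑ k ∈ range m, ((m - 1) ⌈/⌉ l - k ⌈/⌉ l) = ∑ t ∈ range ((m - 1) ⌈/⌉ l), (l * t + 1) := by
  -- double counting of the pairs `k < m`, `t < q` with `k ≤ l * t`
  set q := (m - 1) ⌈/⌉ l
  have habove (k : ℕ) : q - k ⌈/⌉ l = #((range q).bipartiteAbove (fun k t => k ≤ l * t) k) := by
    have : (range q).bipartiteAbove (fun k t => k ≤ l * t) k = Ico (k ⌈/⌉ l) q := by
      ext t
      simp [bipartiteAbove, ← ceilDiv_le_iff_le_mul hl, and_comm]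
    rw [this, Nat.card_Ico]
  have hbelow (t : ℕ) (ht : t ∈ range q) :
      #((range m).bipartiteBelow (fun k t => k ≤ l * t) t) = l * t + 1 := by
    have htq : l * t < m - 1 :=
      lt_of_not_ge fun h => (mem_range.1 ht).not_ge ((ceilDiv_le_iff_le_mul hl).2 h)
    have : (range m).bipartiteBelow (fun k t => k ≤ l * t) t = range (l * t + 1) := by
      ext k
      simp only [bipartiteBelow, mem_filter, mem_range]
      omega
    rw [this, card_range]
  simp_rw [habove]
  rw [sum_card_bipartiteAbove_eq_sum_card_bipartiteBelow, sum_congr rfl hbelow]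

lemma wilf_estimate {m h l q d E D : ℕ} (hm : 0 < m) (hl : 0 < l) (hmq : m ≤ q * l + 1)
    (hE : 2 * E = l * q * (q - 1) + 2 * q) (hD : 2 * D + (m - 1) = (m - 1) * d) :
    q * (h * m) + (m - 1) * d + 1 ≤ (h * E + D) * (l + 1) + m := by
  -- twice the difference of the two sides is `2hq(ql + 1 - m) + hq(q - 1)l(l - 1) + 2D(l - 1)`
  obtain ⟨m, rfl⟩ : ∃ m', m = m' + 1 := ⟨m - 1, by omega⟩
  obtain ⟨l, rfl⟩ : ∃ l', l = l' + 1 := ⟨l - 1, by omega⟩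
  rcases q with _ | q
  · have : m = 0 := by omega
    subst this
    simp
  simp only [Nat.add_sub_cancel] at hE hD ⊢
  have hE' := congrArg (· * (h * (l + 2))) hE
  have hD' := congrArg (· * (l + 2)) hD
  nlinarith [Nat.mul_le_mul_left (h * (q + 1)) hmq, Nat.zero_le (h * (q + 1) * q * (l + 1) * l),
    Nat.zero_le (D * l)]

end Sums

section GenArith

open Finset

variable {m h d l : ℕ}

def genArith (m h d l : ℕ) : AddSubmonoid ℕ :=
  AddSubmonoid.closure (({m} : Set ℕ) ∪ (fun i => h * m + i * d) '' Set.Icc 1 l)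

/-- For `k < m`, the least element of `genArith m h d l` congruent to `k * d` modulo `m`: reaching
`k * d` takes at least `k ⌈/⌉ l` generators `h * m + i * d`. -/
def aperyElt (m h d l k : ℕ) : ℕ := k ⌈/⌉ l * (h * m) + k * d

/-- For `k < m`, the number of elements of `genArith m h d l` congruent to `k * d` modulo `m` and
below its Frobenius number `aperyElt (m - 1) - m`. -/
def smallCount (m h d l k : ℕ) : ℕ := ((m - 1) ⌈/⌉ l - k ⌈/⌉ l) * h + (m - 1 - k) * d / m

lemma exists_eq_of_mem_genArith {x : ℕ} (hx : x ∈ genArith m h d l) :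
    ∃ a B K, x = a * m + B * (h * m) + K * d ∧ K ≤ l * B := by
  induction hx using AddSubmonoid.closure_induction with
  | mem x hx =>
    rcases hx with rfl | ⟨i, hi, rfl⟩
    · exact ⟨1, 0, 0, by ring, le_rfl⟩
    · exact ⟨0, 1, i, by ring, by simpa using hi.2⟩
  | zero => exact ⟨0, 0, 0, by ring, le_rfl⟩
  | add x y _ _ hx hy =>
    obtain ⟨a, B, K, rfl, hK⟩ := hx
    obtain ⟨a', B', K', rfl, hK'⟩ := hy
    exact ⟨a + a', B + B', K + K', by ring, by rw [mul_add]; omega⟩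

lemma aperyElt_mono (hl : 0 < l) : Monotone (aperyElt m h d l) := fun _ _ hk =>
  add_le_add (Nat.mul_le_mul_right _ ((gc_mul_ceilDiv hl).monotone_l hk))
    (Nat.mul_le_mul_right _ hk)

lemma aperyElt_of_pos_of_le {k : ℕ} (hk : 0 < k) (hkl : k ≤ l) :
    aperyElt m h d l k = h * m + k * d := by
  have hl : 0 < l := hk.trans_le hkl
  have : k ⌈/⌉ l = 1 :=
    le_antisymm ((ceilDiv_le_iff_le_mul hl).2 (by omega)) ((Nat.ceilDiv_pos hl).2 hk)
  rw [aperyElt, this, one_mul]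

lemma add_mul_le_aperyElt (hl : 0 < l) {k : ℕ} (hk : 0 < k) :
    h * m + k * d ≤ aperyElt m h d l k :=
  Nat.add_le_add_right (Nat.le_mul_of_pos_left _ ((Nat.ceilDiv_pos hl).2 hk)) _

lemma aperyElt_add (hl : 0 < l) (k : ℕ) :
    aperyElt m h d l (k + l) = aperyElt m h d l k + (h * m + l * d) := by
  rw [aperyElt, aperyElt, Nat.add_self_ceilDiv hl]
  ring

lemma aperyElt_mem (hl : 0 < l) (k : ℕ) : aperyElt m h d l k ∈ genArith m h d l := by
  induction k using Nat.strong_induction_on with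
  | _ k ih =>
    rcases Nat.eq_zero_or_pos k with rfl | hk
    · simp [aperyElt, zero_mem]
    by_cases hkl : k ≤ l
    · rw [aperyElt_of_pos_of_le hk hkl]
      exact AddSubmonoid.subset_closure (Or.inr ⟨k, ⟨hk, hkl⟩, rfl⟩)
    · obtain ⟨k, rfl⟩ : ∃ k', k = k' + l := ⟨k - l, by omega⟩
      rw [aperyElt_add hl]
      exact add_mem (ih k (by omega))
        (AddSubmonoid.subset_closure (Or.inr ⟨l, ⟨hl, le_rfl⟩, rfl⟩))

lemma residueIndex_aperyElt (hd : d.Coprime m) {k : ℕ} (hk : k < m) :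
    residueIndex m d (aperyElt m h d l k) = k := by
  rw [aperyElt, add_comm, show k ⌈/⌉ l * (h * m) = k ⌈/⌉ l * h * m by ring,
    residueIndex_add_mul_self_right, residueIndex_mul hd, Nat.mod_eq_of_lt hk]

lemma aperyElt_residueIndex_le (hl : 0 < l) (hd : d.Coprime m) {x : ℕ}
    (hx : x ∈ genArith m h d l) : aperyElt m h d l (residueIndex m d x) ≤ x := by
  obtain ⟨a, B, K, rfl, hK⟩ := exists_eq_of_mem_genArith hx
  have hres : residueIndex m d (a * m + B * (h * m) + K * d) ≤ K := by
    rw [show a * m + B * (h * m) + K * d = K * d + (a + B * h) * m by ring,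
      residueIndex_add_mul_self_right, residueIndex_mul hd]
    exact Nat.mod_le _ _
  calc aperyElt m h d l (residueIndex m d _) ≤ aperyElt m h d l K := aperyElt_mono hl hres
    _ ≤ B * (h * m) + K * d :=
      Nat.add_le_add_right (Nat.mul_le_mul_right _ ((ceilDiv_le_iff_le_mul hl).2 hK)) _
    _ ≤ a * m + B * (h * m) + K * d := by omega

lemma aperyElt_add_mul_lt (hl : 0 < l) (hd : d.Coprime m) {k j : ℕ} (hk : k < m)
    (hj : j < smallCount m h d l k) :
    aperyElt m h d l k + j * m < aperyElt m h d l (m - 1) - m := by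
  have hk' : k < m - 1 := by
    by_contra hk'
    obtain rfl : k = m - 1 := by omega
    simp [smallCount] at hj
  have hndvd : ¬ m ∣ (m - 1 - k) * d := fun hdvd =>
    absurd (Nat.le_of_dvd (by omega) (hd.symm.dvd_of_dvd_mul_right hdvd)) (by omega)
  have hfloor : (m - 1 - k) * d / m * m < (m - 1 - k) * d :=
    (Nat.div_mul_le_self _ _).lt_of_ne fun h => hndvd (Dvd.intro_left _ h)
  have hceil : k ⌈/⌉ l ≤ (m - 1) ⌈/⌉ l := (gc_mul_ceilDiv hl).monotone_l hk'.le
  have h1 : k ⌈/⌉ l * (h * m) + ((m - 1) ⌈/⌉ l - k ⌈/⌉ l) * (h * m) =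
      (m - 1) ⌈/⌉ l * (h * m) := by
    rw [← add_mul, Nat.add_sub_cancel' hceil]
  have h2 : k * d + (m - 1 - k) * d = (m - 1) * d := by
    rw [← add_mul, Nat.add_sub_cancel' (by omega)]
  have h3 : (j + 1) * m ≤ smallCount m h d l k * m := Nat.mul_le_mul_right _ hj
  rw [smallCount, add_mul, add_mul, one_mul, mul_assoc] at h3
  unfold aperyElt
  omega

lemma genArith_fg : (genArith m h d l).FG :=
  (AddSubmonoid.fg_iff _).2
    ⟨_, rfl, (Set.finite_singleton m).union ((Set.finite_Icc 1 l).image _)⟩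

lemma le_aperyElt_pred (hl : 0 < l) (hh : 0 < h) (hm : 1 < m) :
    m ≤ aperyElt m h d l (m - 1) :=
  (Nat.le_mul_of_pos_left m hh).trans
    ((Nat.le_add_right _ _).trans (add_mul_le_aperyElt hl (by omega)))

variable [NeZero m]

lemma mem_genArith_iff (hl : 0 < l) (hd : d.Coprime m) {x : ℕ} :
    x ∈ genArith m h d l ↔ aperyElt m h d l (residueIndex m d x) ≤ x := by
  refine ⟨aperyElt_residueIndex_le hl hd, fun hle => ?_⟩
  have hmod : aperyElt m h d l (residueIndex m d x) ≡ x [MOD m] :=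
    (residueIndex_eq_iff hd).1 (residueIndex_aperyElt hd (residueIndex_lt x))
  obtain ⟨c, hc⟩ := (Nat.modEq_iff_dvd' hle).1 hmod
  have hm : m ∈ genArith m h d l := AddSubmonoid.subset_closure (Or.inl rfl)
  rw [← Nat.add_sub_cancel' hle, hc, mul_comm, ← smul_eq_mul]
  exact add_mem (aperyElt_mem hl _) (nsmul_mem hm c)

lemma aperyElt_pred_sub_notMem (hl : 0 < l) (hd : d.Coprime m)
    (hm : m ≤ aperyElt m h d l (m - 1)) : aperyElt m h d l (m - 1) - m ∉ genArith m h d l := by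
  have hres : residueIndex m d (aperyElt m h d l (m - 1) - m) = m - 1 := by
    rw [← residueIndex_add_mul_self_right _ 1, one_mul, Nat.sub_add_cancel hm,
      residueIndex_aperyElt hd (Nat.sub_one_lt (NeZero.ne m))]
  rw [mem_genArith_iff hl hd, hres]
  have := NeZero.pos m
  omega

lemma mem_genArith_of_lt (hl : 0 < l) (hd : d.Coprime m) {n : ℕ}
    (hn : aperyElt m h d l (m - 1) < n + m) : n ∈ genArith m h d l := by
  rw [mem_genArith_iff hl hd]
  refine Nat.ModEq.le_of_lt_add
    ((residueIndex_eq_iff hd).1 (residueIndex_aperyElt hd (residueIndex_lt n))) ?_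
  exact (aperyElt_mono hl (Nat.le_sub_one_of_lt (residueIndex_lt n))).trans_lt hn

lemma le_of_mem_genArith (hl : 0 < l) (hh : 0 < h) (hd : d.Coprime m) {x : ℕ}
    (hx : x ∈ genArith m h d l) (hx0 : x ≠ 0) : m ≤ x := by
  rcases Nat.eq_zero_or_pos (residueIndex m d x) with h0 | hpos
  · have : x ≡ 0 [MOD m] := (residueIndex_eq_iff hd).1 (h0.trans (by simp [residueIndex]))
    exact Nat.le_of_dvd (Nat.pos_of_ne_zero hx0) (Nat.modEq_zero_iff_dvd.1 this)
  · calc m ≤ h * m + residueIndex m d x * d := le_add_right (Nat.le_mul_of_pos_left m hh)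
      _ ≤ aperyElt m h d l (residueIndex m d x) := add_mul_le_aperyElt hl hpos
      _ ≤ x := aperyElt_residueIndex_le hl hd hx

lemma indecomposable_genArith_self (hl : 0 < l) (hh : 0 < h) (hd : d.Coprime m) :
    (genArith m h d l).Indecomposable m := by
  refine ⟨AddSubmonoid.subset_closure (Or.inl rfl), NeZero.ne m, fun a ha b hb hab => ?_⟩
  by_contra! hne
  have := le_of_mem_genArith hl hh hd ha hne.1
  have := le_of_mem_genArith hl hh hd hb hne.2
  have := NeZero.pos m
  omega

lemma indecomposable_genArith_aperyElt (hh : 0 < h) (hd : d.Coprime m) {i : ℕ} (hi : 0 < i)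
    (hil : i ≤ l) (him : i < m) : (genArith m h d l).Indecomposable (aperyElt m h d l i) := by
  have hl : 0 < l := hi.trans_le hil
  have hhm : 0 < h * m := Nat.mul_pos hh (NeZero.pos m)
  have hval := aperyElt_of_pos_of_le (m := m) (h := h) (d := d) hi hil
  refine ⟨aperyElt_mem hl i, by omega, fun a ha b hb hab => ?_⟩
  by_contra! hne
  -- either one summand has residue index `≥ i`, hence is `≥ aperyElt i`, or both are
  -- `≥ h * m + _`, which overshoots
  have hres : i ≤ residueIndex m d a + residueIndex m d b := by
    simpa [hab, residueIndex_aperyElt hd him] using residueIndex_add_le (m := m) (d := d) a b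
  have haS := aperyElt_residueIndex_le hl hd ha
  have hbS := aperyElt_residueIndex_le hl hd hb
  rcases Nat.eq_zero_or_pos (residueIndex m d a) with ha0 | ha0
  · have := aperyElt_mono (m := m) (h := h) (d := d) hl (show i ≤ residueIndex m d b by omega)
    omega
  rcases Nat.eq_zero_or_pos (residueIndex m d b) with hb0 | hb0
  · have := aperyElt_mono (m := m) (h := h) (d := d) hl (show i ≤ residueIndex m d a by omega)
    omega
  have := add_mul_le_aperyElt (m := m) (h := h) (d := d) hl ha0
  have := add_mul_le_aperyElt (m := m) (h := h) (d := d) hl hb0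
  have := Nat.mul_le_mul_right d hres
  rw [add_mul] at this
  omega

lemma aperyElt_pred_add_one_le (hl : 0 < l) (hd : d.Coprime m) :
    aperyElt m h d l (m - 1) + 1 ≤ (∑ k ∈ range m, smallCount m h d l k) * (l + 1) + m := by
  have hsum : ∑ k ∈ range m, smallCount m h d l k =
      h * ∑ t ∈ range ((m - 1) ⌈/⌉ l), (l * t + 1) + ∑ k ∈ range m, k * d / m := by
    simp only [smallCount, sum_add_distrib, ← sum_mul, sum_ceilDiv_sub l m hl,
      sum_range_reflect (fun k => k * d / m) m, mul_comm h]
  set q := (m - 1) ⌈/⌉ l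
  have hE : 2 * ∑ t ∈ range q, (l * t + 1) = l * q * (q - 1) + 2 * q := by
    rw [sum_add_distrib, ← mul_sum, sum_const, card_range, smul_eq_mul, mul_one, mul_add,
      ← mul_assoc, mul_comm 2 l, mul_assoc, mul_comm 2, sum_range_id_mul_two, mul_assoc]
  have hmq : m ≤ q * l + 1 := by
    have := (ceilDiv_le_iff_le_mul hl).1 (le_refl q)
    rw [mul_comm] at this
    omega
  rw [hsum]
  exact wilf_estimate (NeZero.pos m) hl hmq hE (two_mul_sum_mul_div_add hd)

end GenArith

namespace NumericalSemigroup

lemma frob_eq_of_notMem {S : NumericalSemigroup} {f : ℕ} (hf : f ∉ S.carrier)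
    (hgt : ∀ n, f < n → n ∈ S.carrier) : S.frob = f := by
  refine IsGreatest.csSup_eq ⟨fun s hs hsf => hf (Nat.cast_injective hsf ▸ hs), fun x hx => ?_⟩
  by_contra! hlt
  lift x to ℕ using by omega
  exact hx x (hgt x (by exact_mod_cast hlt)) rfl

lemma card_le_small (S : NumericalSemigroup) {α : Type*} (s : Finset α) (f : α → ℕ)
    (hf : ∀ a ∈ s, f a ∈ S.carrier ∧ (f a : ℤ) < S.frob) (hinj : Set.InjOn f s) :
    s.card ≤ S.small := by
  rw [← Set.ncard_coe_finset]
  refine Set.ncard_le_ncard_of_injOn f hf hinj ((Set.finite_lt_nat S.frob.toNat).subset ?_)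
  intro x hx
  have := hx.2
  show x < S.frob.toNat
  omega

lemma card_le_embdim (S : NumericalSemigroup) {M : AddSubmonoid ℕ} (hS : S.carrier = M)
    (hM : M.FG) {T : Finset ℕ} (hT : ∀ x ∈ T, M.Indecomposable x) : T.card ≤ S.embdim := by
  obtain ⟨G₀, hG₀⟩ := hM
  obtain ⟨G, hG, hcard⟩ := Nat.sInf_mem (s := {n : ℕ | ∃ G : Finset ℕ,
      S.carrier = (AddSubmonoid.closure (G : Set ℕ) : Set ℕ) ∧ G.card = n})
    ⟨G₀.card, G₀, hS.trans (congrArg _ hG₀.symm), rfl⟩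
  have hGM : AddSubmonoid.closure (G : Set ℕ) = M := SetLike.coe_injective (hG.symm.trans hS)
  rw [embdim, ← hcard]
  exact Finset.card_le_card fun x hx => (hGM ▸ hT x hx).mem

section GenArith

open Finset

variable {m h d l : ℕ} [NeZero m] {S : NumericalSemigroup}

lemma frob_eq_of_carrier_eq_genArith (hS : S.carrier = genArith m h d l) (hl : 0 < l)
    (hd : d.Coprime m) (hm : m ≤ aperyElt m h d l (m - 1)) :
    S.frob = (aperyElt m h d l (m - 1) - m : ℕ) := by
  refine frob_eq_of_notMem (by rw [hS]; exact aperyElt_pred_sub_notMem hl hd hm) fun n hn => ?_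
  rw [hS]
  exact mem_genArith_of_lt hl hd (by omega)

lemma sum_smallCount_le_small (hS : S.carrier = genArith m h d l) (hl : 0 < l)
    (hd : d.Coprime m) (hF : S.frob = (aperyElt m h d l (m - 1) - m : ℕ)) :
    ∑ k ∈ range m, smallCount m h d l k ≤ S.small := by
  have hcard := card_sigma (range m) fun k => range (smallCount m h d l k)
  simp only [card_range] at hcard
  rw [← hcard]
  refine S.card_le_small _ (fun p => aperyElt m h d l p.1 + p.2 * m) (fun p hp => ?_) ?_
  · rw [mem_sigma, mem_range, mem_range] at hp
    refine ⟨?_, hF ▸ by exact_mod_cast aperyElt_add_mul_lt hl hd hp.1 hp.2⟩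
    rw [hS, SetLike.mem_coe, mem_genArith_iff hl hd, residueIndex_add_mul_self_right,
      residueIndex_aperyElt hd hp.1]
    exact Nat.le_add_right _ _
  · rintro ⟨k, j⟩ hp ⟨k', j'⟩ hp' heq
    simp only [coe_sigma, Set.mem_sigma_iff, coe_range, Set.mem_Iio] at hp hp' heq
    obtain rfl : k = k' := by
      simpa [residueIndex_add_mul_self_right, residueIndex_aperyElt hd hp.1,
        residueIndex_aperyElt hd hp'.1] using congrArg (residueIndex m d) heq
    obtain rfl : j = j' := Nat.eq_of_mul_eq_mul_right (NeZero.pos m) (Nat.add_left_cancel heq)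
    rfl

lemma add_one_le_embdim (hS : S.carrier = genArith m h d l) (hl : 0 < l) (hh : 0 < h)
    (hd : d.Coprime m) (hlm : l < m) : l + 1 ≤ S.embdim := by
  have hres {i : ℕ} (hi : i ∈ Icc 1 l) : residueIndex m d (aperyElt m h d l i) = i :=
    residueIndex_aperyElt hd ((mem_Icc.1 hi).2.trans_lt hlm)
  have hinj : Set.InjOn (aperyElt m h d l) (Icc 1 l) := fun i hi j hj hij => by
    rw [← hres hi, hij, hres hj]
  have hm : m ∉ (Icc 1 l).image (aperyElt m h d l) := by
    intro hm
    obtain ⟨i, hi, hmi⟩ := mem_image.1 hm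
    have := hres hi
    rw [hmi] at this
    simp [residueIndex] at this
    rw [mem_Icc] at hi
    omega
  calc l + 1 = (insert m ((Icc 1 l).image (aperyElt m h d l))).card := by
        rw [card_insert_of_notMem hm, card_image_of_injOn hinj, Nat.card_Icc, Nat.add_sub_cancel]
    _ ≤ S.embdim := S.card_le_embdim hS genArith_fg fun x hx => by
        rcases mem_insert.1 hx with rfl | hx
        · exact indecomposable_genArith_self hl hh hd
        · obtain ⟨i, hi, rfl⟩ := mem_image.1 hx
          rw [mem_Icc] at hi
          exact indecomposable_genArith_aperyElt hh hd hi.1 hi.2 (hi.2.trans_lt hlm)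

end GenArith

theorem wilf_of_generalized_arithmetic_general (S : NumericalSemigroup)
    (m h d l : ℕ) (hh : 1 ≤ h)
    (hl : 1 ≤ l) (hlm : l ≤ m - 2) (hgcd : Nat.gcd m d = 1)
    (hgen : S.carrier =
      (AddSubmonoid.closure (({m} : Set ℕ) ∪ (fun i => h * m + i * d) '' Set.Icc 1 l) : Set ℕ)) :
    S.frob + 1 ≤ (S.small : ℤ) * (S.embdim : ℤ) := by
  have : NeZero m := ⟨by omega⟩
  have hd : d.Coprime m := Nat.coprime_comm.1 hgcd
  have hF := le_aperyElt_pred (m := m) (h := h) (d := d) hl hh (by omega)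
  have hfrob := frob_eq_of_carrier_eq_genArith hgen hl hd hF
  have hcount := aperyElt_pred_add_one_le (h := h) hl hd
  have hsmall := sum_smallCount_le_small hgen hl hd hfrob
  have hemb := add_one_le_embdim hgen hl hh hd (by omega)
  have hwilf := Nat.mul_le_mul hsmall hemb
  rw [hfrob]
  exact_mod_cast show aperyElt m h d l (m - 1) - m + 1 ≤ S.small * S.embdim by omega

/-- A numerical semigroup generated by a generalized arithmetic sequence
`m, hm+d, hm+2d, ..., hm+ld` (with `m ≥ 2`, `h ≥ 1`, `d ≥ 1`, `gcd(m,d) = 1`,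
`1 ≤ l ≤ m-2`) satisfies Wilf's conjecture. -/
theorem wilf_of_generalized_arithmetic (S : NumericalSemigroup)
    (m h d l : ℕ) (hm : 2 ≤ m) (hh : 1 ≤ h) (hd : 1 ≤ d)
    (hl : 1 ≤ l) (hlm : l ≤ m - 2) (hgcd : Nat.gcd m d = 1)
    (hgen : S.carrier =
      (AddSubmonoid.closure (({m} : Set ℕ) ∪ (fun i => h * m + i * d) '' Set.Icc 1 l) : Set ℕ)) :
    S.frob + 1 ≤ (S.small : ℤ) * (S.embdim : ℤ) :=
  wilf_of_generalized_arithmetic_general S m h d l hh hl hlm hgcd hgen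

end NumericalSemigroup
end

section
/- Let S be a numerical semigroup with m(S) − ν(S) ≤ 2. Then S satisfies Wilf's conjecture, i.e. f(S) + 1 ≤ n(S)·ν(S). -/
namespace NumericalSemigroup

/-!
Write `Ap` for the Apéry set of `S` with respect to `m = m(S)`, ordered by `a ≼ b ↔ b - a ∈ S`.
The minimal generators other than `m` are the indecomposable nonzero elements of `Ap`, so
`m - ν` is the number of decomposable ones. Both summands of a decomposable element of `Ap` are
non-maximal nonzero elements of `Ap`, so when at most two elements are decomposable there are at
least as many non-maximal ones. As `p ↦ p + m` embeds the pseudo-Frobenius numbers into the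
maximal nonzero elements of `Ap`, it follows that `t ≤ (m - 1) - (m - ν)`, i.e. `t + 1 ≤ ν`.
Combined with the classical bound `g ≤ t·n` (each gap lies `≼`-below a pseudo-Frobenius number)
this yields `f + 1 = n + g ≤ n (t + 1) ≤ n ν`.
-/

open Pointwise in
lemma _root_.Set.ncard_le_ncard_of_subset_add_self {α : Type*} [Add α] {D N : Set α}
    (hN : N.Finite) (hD : D ⊆ N + N) (hD2 : D.ncard ≤ 2) : D.ncard ≤ N.ncard := by
  rcases Nat.lt_or_ge N.ncard 2 with hN2 | hN2
  · interval_cases h : N.ncard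
    · rw [(Set.ncard_eq_zero hN).mp h, Set.empty_add, Set.subset_empty_iff] at hD
      rw [hD, Set.ncard_empty]
    · obtain ⟨x, rfl⟩ := Set.ncard_eq_one.mp h
      rw [Set.singleton_add_singleton] at hD
      simpa using Set.ncard_le_ncard hD
  · omega

section

variable (S : NumericalSemigroup)

lemma exists_forall_le_mem : ∃ B : ℕ, ∀ x : ℕ, B ≤ x → x ∈ S.carrier := by
  obtain ⟨B, hB⟩ := S.cofinite.bddAbove
  exact ⟨B + 1, fun x hx => by_contra fun hxc => absurd (hB hxc) (by omega)⟩

lemma frob_bddAbove : BddAbove {x : ℤ | ∀ s ∈ S.carrier, (s : ℤ) ≠ x} := by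
  obtain ⟨B, hB⟩ := S.exists_forall_le_mem
  refine ⟨B, fun x hx => not_lt.mp fun hBx => hx x.toNat (hB _ (by omega)) (by omega)⟩

lemma le_frob {x : ℤ} (hx : ∀ s ∈ S.carrier, (s : ℤ) ≠ x) : x ≤ S.frob :=
  le_csSup S.frob_bddAbove hx

lemma neg_one_le_frob : -1 ≤ S.frob :=
  S.le_frob fun s _ => by omega

lemma natCast_ne_frob {s : ℕ} (hs : s ∈ S.carrier) : (s : ℤ) ≠ S.frob :=
  Int.csSup_mem ⟨-1, fun s _ => by omega⟩ S.frob_bddAbove s hs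

lemma mem_of_frob_lt {x : ℕ} (hx : S.frob < x) : x ∈ S.carrier :=
  by_contra fun hxc =>
    (S.le_frob (x := x) fun _ hs hsx => hxc (Int.natCast_inj.mp hsx ▸ hs)).not_gt hx

lemma mult_mem_and_pos : S.mult ∈ S.carrier ∧ 0 < S.mult := by
  obtain ⟨B, hB⟩ := S.exists_forall_le_mem
  exact Nat.sInf_mem (s := {s | s ∈ S.carrier ∧ 0 < s}) ⟨B + 1, hB _ (by omega), by omega⟩

lemma mult_mem : S.mult ∈ S.carrier := S.mult_mem_and_pos.1

lemma mult_pos : 0 < S.mult := S.mult_mem_and_pos.2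

lemma mult_le_of_mem {x : ℕ} (h0 : 0 < x) (hx : x ∈ S.carrier) : S.mult ≤ x :=
  Nat.sInf_le (s := {s | s ∈ S.carrier ∧ 0 < s}) ⟨hx, h0⟩

lemma frob_eq_neg_one_of_mult_eq_one (h : S.mult = 1) : S.frob = -1 := by
  have hall : ∀ x : ℕ, x ∈ S.carrier := fun x => by
    induction x with
    | zero => exact S.zero_mem
    | succ n ih => exact S.add_mem ih (h ▸ S.mult_mem)
  have hneg : S.frob < 0 := not_le.mp fun h0 => S.natCast_ne_frob (hall S.frob.toNat) (by omega)
  linarith [S.neg_one_le_frob]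

lemma one_le_frob (hm : 2 ≤ S.mult) : 1 ≤ S.frob :=
  S.le_frob fun s hs hs1 => by
    have := S.mult_le_of_mem (x := s) (by omega) hs
    omega

lemma add_mul_mult_mem {u : ℕ} (hu : u ∈ S.carrier) (k : ℕ) : u + k * S.mult ∈ S.carrier := by
  induction k with
  | zero => simpa using hu
  | succ n ih => simpa [add_mul, ← add_assoc] using S.add_mem ih S.mult_mem

noncomputable def genus : ℕ := (S.carrierᶜ).ncard

lemma small_finite : {s : ℕ | s ∈ S.carrier ∧ (s : ℤ) < S.frob}.Finite :=
  (Set.finite_Iio S.frob.toNat).subset fun x ⟨_, hx⟩ => by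
    simp only [Set.mem_Iio]
    omega

lemma frob_add_one_eq_small_add_genus : S.frob + 1 = S.small + S.genus := by
  have hunion : {s : ℕ | s ∈ S.carrier ∧ (s : ℤ) < S.frob} ∪ S.carrierᶜ
      = Set.Iio (S.frob + 1).toNat := by
    ext x
    simp only [Set.mem_union, Set.mem_ofPred_eq, Set.mem_compl_iff, Set.mem_Iio]
    by_cases hx : x ∈ S.carrier
    · have := S.natCast_ne_frob hx
      simp only [hx, true_and, not_true, or_false]
      constructor <;> intro <;> omega
    · have := not_lt.mp (mt S.mem_of_frob_lt hx)
      simp only [hx, false_and, not_false_eq_true, or_true, true_iff]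
      omega
  have hdisj : Disjoint {s : ℕ | s ∈ S.carrier ∧ (s : ℤ) < S.frob} S.carrierᶜ :=
    Set.disjoint_left.mpr fun _ hx hnx => hnx hx.1
  have hcard := Set.ncard_union_eq hdisj S.small_finite S.cofinite
  rw [hunion, ← Finset.coe_Iio, Set.ncard_coe_finset, Nat.card_Iio] at hcard
  have := S.neg_one_le_frob
  rw [small, genus]
  omega

noncomputable def pseudoFrobenius : Set ℤ :=
  {x : ℤ | (∀ s ∈ S.carrier, (s : ℤ) ≠ x) ∧
    ∀ s ∈ S.carrier, 0 < s → ∃ u ∈ S.carrier, (u : ℤ) = x + s}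

lemma typ_eq_ncard_pseudoFrobenius : S.typ = S.pseudoFrobenius.ncard := rfl

lemma pseudoFrobenius_finite : S.pseudoFrobenius.Finite := by
  refine (Set.finite_Icc (-(S.mult : ℤ)) S.frob).subset fun p ⟨hp, hadd⟩ => ⟨?_, S.le_frob hp⟩
  obtain ⟨u, -, hu⟩ := hadd S.mult S.mult_mem S.mult_pos
  omega

/-- The largest gap of the form `x + s` with `s ∈ S` is pseudo-Frobenius. -/
lemma exists_add_mem_pseudoFrobenius {x : ℕ} (hx : x ∉ S.carrier) :
    ∃ s ∈ S.carrier, ((x + s : ℕ) : ℤ) ∈ S.pseudoFrobenius := by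
  set T := {s : ℕ | s ∈ S.carrier ∧ x + s ∉ S.carrier}
  have hT : T.Finite :=
    (S.cofinite.preimage (add_right_injective x).injOn).subset fun s hs => hs.2
  obtain ⟨s, ⟨hs, hxs⟩, hmax⟩ := Set.exists_max_image T id hT ⟨0, S.zero_mem, by simpa using hx⟩
  refine ⟨s, hs, fun t ht hte => hxs (Nat.cast_inj.mp hte ▸ ht), fun t ht ht0 => ?_⟩
  refine ⟨x + s + t, by_contra fun hn => ?_, by push_cast; ring⟩
  have := hmax (s + t) ⟨S.add_mem hs ht, by rwa [← add_assoc]⟩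
  simp only [id] at this
  omega

lemma genus_le_typ_mul_small : S.genus ≤ S.typ * S.small := by
  have hpf : ∀ x, ∃ s, x ∉ S.carrier → s ∈ S.carrier ∧ ((x + s : ℕ) : ℤ) ∈ S.pseudoFrobenius :=
    fun x => by
      by_cases hx : x ∈ S.carrier
      · exact ⟨0, fun h => absurd hx h⟩
      · obtain ⟨s, hs⟩ := S.exists_add_mem_pseudoFrobenius hx
        exact ⟨s, fun _ => hs⟩
  choose σ hσ using hpf
  rw [genus, typ_eq_ncard_pseudoFrobenius, small, ← Set.ncard_prod]
  refine Set.ncard_le_ncard_of_injOn (fun x => (((x + σ x : ℕ) : ℤ), σ x)) (fun x hx => ?_)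
    (fun x hx y hy hxy => ?_) (S.pseudoFrobenius_finite.prod S.small_finite)
  · obtain ⟨hs, hp⟩ := hσ x hx
    have hx0 : x ≠ 0 := fun h => hx (h ▸ S.zero_mem)
    have := S.le_frob hp.1
    exact ⟨hp, hs, by omega⟩
  · simp only [Prod.mk.injEq] at hxy
    omega

lemma frob_add_one_le_small_mul_typ_add_one : S.frob + 1 ≤ S.small * (S.typ + 1) := by
  have := S.genus_le_typ_mul_small
  rw [S.frob_add_one_eq_small_add_genus]
  nlinarith

lemma injOn_mod_mult_apery : Set.InjOn (· % S.mult) S.apery := by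
  have key : ∀ a ∈ S.apery, ∀ b ∈ S.apery, a % S.mult = b % S.mult → a ≤ b → a = b := by
    intro a ha b hb hab hle
    obtain ⟨k, hk⟩ := (Nat.modEq_iff_dvd' hle).mp hab
    rcases k with _ | k
    · omega
    · refine absurd ?_ (hb.2 _ (S.add_mul_mult_mem ha.1 k))
      rw [Nat.mul_succ, Nat.mul_comm] at hk
      omega
  intro a ha b hb hab
  rcases le_total a b with h | h
  exacts [key a ha b hb hab h, (key b hb a ha hab.symm h).symm]

/-- The least element of `S` in each residue class modulo `m` lies in the Apéry set. -/
lemma image_mod_mult_apery : (· % S.mult) '' S.apery = Set.Iio S.mult := by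
  refine subset_antisymm (Set.image_subset_iff.mpr fun a _ => Nat.mod_lt a S.mult_pos)
    fun r hr => ?_
  classical
  obtain ⟨B, hB⟩ := S.exists_forall_le_mem
  have hex : ∃ k, r + k * S.mult ∈ S.carrier := ⟨B, hB _ (by nlinarith [S.mult_pos])⟩
  refine ⟨r + Nat.find hex * S.mult, ⟨Nat.find_spec hex, fun u hu hum => ?_⟩, ?_⟩
  · obtain ⟨k, hk⟩ : ∃ k, Nat.find hex = k + 1 :=
      Nat.exists_eq_add_one.mpr (Nat.pos_of_ne_zero fun h0 => by
        rw [h0, zero_mul, add_zero] at hum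
        exact (Set.mem_Iio.mp hr).not_ge (hum ▸ Nat.le_add_left _ _))
    refine Nat.find_min hex (show k < Nat.find hex by omega) ?_
    convert hu using 1
    rw [hk, add_mul] at hum
    omega
  · simp [Nat.mod_eq_of_lt (Set.mem_Iio.mp hr)]

lemma ncard_apery : S.apery.ncard = S.mult := by
  rw [← S.injOn_mod_mult_apery.ncard_image, image_mod_mult_apery, ← Finset.coe_Iio,
    Set.ncard_coe_finset, Nat.card_Iio]

def aperyPos : Set ℕ := S.apery \ {0}

lemma zero_mem_apery : 0 ∈ S.apery :=
  ⟨S.zero_mem, fun _ _ h => by have := S.mult_pos; omega⟩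

lemma ncard_aperyPos : S.aperyPos.ncard = S.mult - 1 := by
  rw [aperyPos, Set.ncard_sdiff_singleton_of_mem S.zero_mem_apery, S.ncard_apery]

lemma aperyPos_finite : S.aperyPos.Finite := S.apery_finite.subset Set.sdiff_subset

def IsDecomposable (a : ℕ) : Prop :=
  ∃ u ∈ S.carrier, ∃ v ∈ S.carrier, 0 < u ∧ 0 < v ∧ u + v = a

def minGens : Set ℕ := {a | a ∈ S.carrier ∧ 0 < a ∧ ¬S.IsDecomposable a}

def decomposableApery : Set ℕ := {a | a ∈ S.aperyPos ∧ S.IsDecomposable a}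

lemma minGens_eq_insert_mult : S.minGens = insert S.mult (S.aperyPos \ S.decomposableApery) := by
  ext a
  constructor
  · rintro ⟨ha, ha0, hnd⟩
    refine or_iff_not_imp_left.mpr fun ham => ⟨⟨⟨ha, fun u hu hua => ?_⟩, ?_⟩, fun hD => hnd hD.2⟩
    · rcases Nat.eq_zero_or_pos u with rfl | hu0
      · exact ham (by omega)
      · exact hnd ⟨u, hu, S.mult, S.mult_mem, hu0, S.mult_pos, hua⟩
    · exact ha0.ne'
  · rintro (rfl | ⟨⟨ha, ha0⟩, hnD⟩)
    · refine ⟨S.mult_mem, S.mult_pos, fun ⟨u, hu, v, hv, hu0, hv0, huv⟩ => ?_⟩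
      have := S.mult_le_of_mem hu0 hu
      have := S.mult_le_of_mem hv0 hv
      omega
    · exact ⟨ha.1, Nat.pos_of_ne_zero ha0, fun hd => hnD ⟨⟨ha, ha0⟩, hd⟩⟩

lemma minGens_finite : S.minGens.Finite := by
  rw [minGens_eq_insert_mult]
  exact (S.aperyPos_finite.subset Set.sdiff_subset).insert _

lemma closure_minGens : (AddSubmonoid.closure S.minGens : Set ℕ) = S.carrier := by
  refine subset_antisymm (fun x hx => ?_) fun s => ?_
  · refine AddSubmonoid.closure_induction (fun a ha => ha.1) S.zero_mem
      (fun a b _ _ ha hb => S.add_mem ha hb) hx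
  induction s using Nat.strong_induction_on with
  | _ s ih =>
    intro hs
    rcases Nat.eq_zero_or_pos s with rfl | hs0
    · exact AddSubmonoid.zero_mem _
    by_cases hd : S.IsDecomposable s
    · obtain ⟨u, hu, v, hv, hu0, hv0, rfl⟩ := hd
      exact AddSubmonoid.add_mem _ (ih u (by omega) hu) (ih v (by omega) hv)
    · exact AddSubmonoid.subset_closure ⟨hs, hs0, hd⟩

lemma minGens_subset_of_closure_eq {G : Set ℕ}
    (hG : S.carrier = (AddSubmonoid.closure G : Set ℕ)) : S.minGens ⊆ G := by
  rintro a ⟨ha, ha0, hnd⟩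
  rw [hG] at ha
  have key : ∀ x ∈ AddSubmonoid.closure G, x = 0 ∨ x ∈ G ∨ S.IsDecomposable x := by
    intro x hx
    induction hx using AddSubmonoid.closure_induction with
    | mem y hy => exact .inr (.inl hy)
    | zero => exact .inl rfl
    | add x y hx hy ihx ihy =>
      rcases Nat.eq_zero_or_pos x with rfl | hx0
      · simpa using ihy
      rcases Nat.eq_zero_or_pos y with rfl | hy0
      · simpa using ihx
      exact .inr (.inr ⟨x, hG ▸ hx, y, hG ▸ hy, hx0, hy0, rfl⟩)
  rcases key a ha with h0 | hG | hd
  exacts [absurd h0 ha0.ne', hG, absurd hd hnd]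

lemma embdim_eq_ncard_minGens : S.embdim = S.minGens.ncard := by
  have hgen : S.carrier = (AddSubmonoid.closure (S.minGens_finite.toFinset : Set ℕ) : Set ℕ) := by
    rw [Set.Finite.coe_toFinset, closure_minGens]
  apply le_antisymm
  · exact Nat.sInf_le ⟨_, hgen, (Set.ncard_eq_toFinset_card _ _).symm⟩
  · refine le_csInf ⟨_, _, hgen, rfl⟩ ?_
    rintro n ⟨G, hG, rfl⟩
    simpa using Set.ncard_le_ncard (S.minGens_subset_of_closure_eq hG) G.finite_toSet

lemma embdim_add_ncard_decomposableApery :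
    S.embdim + S.decomposableApery.ncard = S.mult := by
  have hmult : S.mult ∉ S.aperyPos \ S.decomposableApery :=
    fun h => h.1.1.2 0 S.zero_mem (zero_add _)
  have hsplit := Set.ncard_sdiff_add_ncard_of_subset (fun _ h => h.1 : S.decomposableApery ⊆ _)
    S.aperyPos_finite
  rw [embdim_eq_ncard_minGens, minGens_eq_insert_mult,
    Set.ncard_insert_of_notMem hmult (S.aperyPos_finite.subset Set.sdiff_subset)]
  have := S.ncard_aperyPos
  have := S.mult_pos
  omega

def nonmaxApery : Set ℕ := {a | a ∈ S.aperyPos ∧ ∃ s ∈ S.carrier, 0 < s ∧ a + s ∈ S.apery}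

lemma mem_nonmaxApery_of_add_mem_apery {u v : ℕ} (hu : u ∈ S.carrier) (hv : v ∈ S.carrier)
    (hu0 : 0 < u) (hv0 : 0 < v) (huv : u + v ∈ S.apery) : u ∈ S.nonmaxApery :=
  ⟨⟨⟨hu, fun t ht htu => huv.2 (t + v) (S.add_mem ht hv) (by omega)⟩, hu0.ne'⟩, v, hv, hv0, huv⟩

open Pointwise in
lemma decomposableApery_subset_add : S.decomposableApery ⊆ S.nonmaxApery + S.nonmaxApery := by
  rintro a ⟨⟨ha, -⟩, u, hu, v, hv, hu0, hv0, rfl⟩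
  exact ⟨u, S.mem_nonmaxApery_of_add_mem_apery hu hv hu0 hv0 ha,
    v, S.mem_nonmaxApery_of_add_mem_apery hv hu hv0 hu0 (add_comm u v ▸ ha), rfl⟩

lemma exists_mem_aperyPos_sdiff_nonmaxApery (hm : 2 ≤ S.mult) {p : ℤ}
    (hp : p ∈ S.pseudoFrobenius) :
    ∃ a ∈ S.aperyPos \ S.nonmaxApery, (a : ℤ) = p + S.mult := by
  obtain ⟨hpS, hpadd⟩ := hp
  obtain ⟨a, ha, hap⟩ := hpadd S.mult S.mult_mem S.mult_pos
  refine ⟨a, ⟨⟨⟨ha, fun u hu hua => hpS u hu (by omega)⟩, fun ha0 => ?_⟩, ?_⟩, hap⟩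
  · have hf := S.one_le_frob hm
    obtain ⟨u, hu, hup⟩ := hpadd (S.frob.toNat + S.mult) (S.mem_of_frob_lt (by omega))
      (by omega)
    exact S.natCast_ne_frob hu (by simp only [Set.mem_singleton_iff] at ha0; omega)
  · rintro ⟨-, s, hs, hs0, has⟩
    obtain ⟨u, hu, hup⟩ := hpadd s hs hs0
    exact has.2 u hu (by omega)

lemma typ_add_ncard_nonmaxApery_lt_mult (hm : 2 ≤ S.mult) :
    S.typ + S.nonmaxApery.ncard < S.mult := by
  have htyp : S.typ ≤ (S.aperyPos \ S.nonmaxApery).ncard := by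
    refine Set.ncard_le_ncard_of_injOn (fun p => (p + S.mult).toNat) (fun p hp => ?_)
      (fun p hp q hq hpq => ?_) (S.aperyPos_finite.subset Set.sdiff_subset)
    · obtain ⟨a, ha, hap⟩ := S.exists_mem_aperyPos_sdiff_nonmaxApery hm hp
      simpa [← hap] using ha
    · obtain ⟨a, -, hap⟩ := S.exists_mem_aperyPos_sdiff_nonmaxApery hm hp
      obtain ⟨b, -, hbq⟩ := S.exists_mem_aperyPos_sdiff_nonmaxApery hm hq
      simp only at hpq
      omega
  have hsplit := Set.ncard_sdiff_add_ncard_of_subset (fun _ h => h.1 : S.nonmaxApery ⊆ _)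
    S.aperyPos_finite
  have := S.ncard_aperyPos
  omega

lemma typ_add_one_le_embdim (hm : 2 ≤ S.mult) (h : S.mult - S.embdim ≤ 2) :
    S.typ + 1 ≤ S.embdim := by
  have hsum := S.embdim_add_ncard_decomposableApery
  have hDN := Set.ncard_le_ncard_of_subset_add_self
    (S.aperyPos_finite.subset fun _ h => h.1) S.decomposableApery_subset_add (by omega)
  have := S.typ_add_ncard_nonmaxApery_lt_mult hm
  omega

end

/-- If `m(S) - ν(S) ≤ 2` then `S` satisfies Wilf's conjecture. -/
theorem wilf_of_mult_sub_embdim_le_two (S : NumericalSemigroup)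
    (h : S.mult - S.embdim ≤ 2) :
    S.frob + 1 ≤ (S.small : ℤ) * (S.embdim : ℤ) := by
  rcases Nat.lt_or_ge S.mult 2 with hm | hm
  · rw [S.frob_eq_neg_one_of_mult_eq_one (by have := S.mult_pos; omega), neg_add_cancel]
    positivity
  · calc S.frob + 1 ≤ S.small * (S.typ + 1) := S.frob_add_one_le_small_mul_typ_add_one
      _ ≤ S.small * S.embdim := by
        gcongr
        exact_mod_cast S.typ_add_one_le_embdim hm h

end NumericalSemigroup
end

section
/- Let S be a numerical semigroup, k ∈ ℕ and j ∈ {1, ..., m(S)−1}. Then the interval I_k contains at least j elements of S if and only if w_{j−1} < (k+1)·m, where m = m(S). -/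
theorem Nat.lt_count_iff_nth_lt {p : ℕ → Prop} [DecidablePred p] (hp : (Set.ofPred p).Finite)
    {k n : ℕ} (hk : k < hp.toFinset.card) : k < Nat.count p n ↔ Nat.nth p k < n := by
  refine ⟨Nat.nth_lt_of_lt_count, fun h => ?_⟩
  calc k < Nat.count p (Nat.nth p k + 1) := by rw [Nat.count_nth_succ fun _ => hk]; omega
    _ ≤ Nat.count p n := Nat.count_monotone p h

namespace NumericalSemigroup

variable (S : NumericalSemigroup)

def toAddSubmonoid : AddSubmonoid ℕ where
  carrier := S.carrier
  zero_mem' := S.zero_mem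
  add_mem' := fun ha hb => S.add_mem ha hb

lemma mem_of_modEq {a x : ℕ} (ha : a ∈ S.carrier) (hax : a ≤ x) (h : a ≡ x [MOD S.mult]) :
    x ∈ S.carrier := by
  obtain ⟨t, ht⟩ := (Nat.modEq_iff_dvd' hax).1 h
  rw [show x = a + t • S.mult by rw [smul_eq_mul]; lia]
  exact S.toAddSubmonoid.add_mem ha (S.toAddSubmonoid.nsmul_mem S.mult_mem_and_pos.1 t)

lemma exists_mem_apery_le_modEq {x : ℕ} (hx : x ∈ S.carrier) :
    ∃ a ∈ S.apery, a ≤ x ∧ a ≡ x [MOD S.mult] := by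
  induction x using Nat.strong_induction_on with
  | _ x ih =>
    by_cases hx' : ∃ u ∈ S.carrier, u + S.mult = x
    · obtain ⟨u, hu, rfl⟩ := hx'
      obtain ⟨a, ha, hau, hmod⟩ := ih u (by linarith [S.mult_pos]) hu
      exact ⟨a, ha, by lia, hmod.trans (Nat.add_modulus_modEq_iff.2 rfl).symm⟩
    · push Not at hx'
      exact ⟨x, ⟨hx, hx'⟩, le_rfl, rfl⟩

lemma eq_of_mem_apery_of_modEq {a b : ℕ} (ha : a ∈ S.apery) (hb : b ∈ S.apery)
    (h : a ≡ b [MOD S.mult]) : a = b := by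
  wlog hab : a ≤ b generalizing a b
  · exact (this hb ha h.symm (by lia)).symm
  by_contra hne
  have hdvd := (Nat.modEq_iff_dvd' hab).1 h
  have hmb : a + S.mult ≤ b := by have := Nat.le_of_dvd (by lia) hdvd; lia
  have hsub : b - S.mult ∈ S.carrier :=
    S.mem_of_modEq ha.1 (by lia) ((Nat.modEq_iff_dvd' (by lia)).2 (by
      rw [show b - S.mult - a = b - a - S.mult by lia]
      exact Nat.dvd_sub hdvd dvd_rfl))
  exact hb.2 _ hsub (by lia)

lemma bijOn_mod_apery : Set.BijOn (· % S.mult) S.apery (Set.Iio S.mult) := by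
  refine ⟨fun a _ => Nat.mod_lt a S.mult_pos, fun a ha b hb h => S.eq_of_mem_apery_of_modEq ha hb h,
    fun r hr => ?_⟩
  obtain ⟨N, hN⟩ := S.cofinite.bddAbove
  have hx : r + (N + 1) * S.mult ∈ S.carrier := by
    by_contra hx
    nlinarith [hN hx, S.mult_pos]
  obtain ⟨a, ha, -, hmod⟩ := S.exists_mem_apery_le_modEq hx
  refine ⟨a, ha, ?_⟩
  rw [Set.mem_Iio] at hr
  show a % S.mult = r
  rw [hmod, Nat.add_mul_mod_self_right, Nat.mod_eq_of_lt hr]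

lemma image_apery_lt_eq_inter_interval (k : ℕ) :
    (fun a => k * S.mult + a % S.mult) '' {a ∈ S.apery | a < (k + 1) * S.mult} =
      S.carrier ∩ interval S.mult k := by
  have hm := S.mult_pos
  ext x
  constructor
  · rintro ⟨a, ⟨ha, hak⟩, rfl⟩
    dsimp only
    have hdiv : a / S.mult ≤ k := Nat.lt_succ_iff.1 ((Nat.div_lt_iff_lt_mul hm).2 hak)
    have hle : a ≤ k * S.mult + a % S.mult := by
      nlinarith [Nat.div_add_mod a S.mult, Nat.mul_le_mul_left S.mult hdiv]
    have hmod : a ≡ k * S.mult + a % S.mult [MOD S.mult] := by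
      simp [Nat.ModEq]
    exact ⟨S.mem_of_modEq ha.1 hle hmod, Nat.le_add_right _ _, by nlinarith [Nat.mod_lt a hm]⟩
  · rintro ⟨hx, hxk, hxk'⟩
    obtain ⟨a, ha, hax, hmod⟩ := S.exists_mem_apery_le_modEq hx
    have hdiv : x / S.mult = k := Nat.div_eq_of_lt_le hxk hxk'
    refine ⟨a, ⟨ha, by lia⟩, ?_⟩
    show k * S.mult + a % S.mult = x
    rw [show a % S.mult = x % S.mult from hmod]
    nlinarith [Nat.div_add_mod x S.mult]

open Classical in
lemma ncard_inter_interval_eq_count (k : ℕ) :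
    (S.carrier ∩ interval S.mult k).ncard =
      Nat.count (· ∈ S.apery) ((k + 1) * S.mult) := by
  have hinj : Set.InjOn (fun a => k * S.mult + a % S.mult) S.apery :=
    fun a ha b hb h => S.eq_of_mem_apery_of_modEq ha hb (Nat.add_left_cancel h)
  rw [← S.image_apery_lt_eq_inter_interval, (hinj.mono fun _ h => h.1).ncard_image,
    Nat.count_eq_card_filter_range, ← Set.ncard_coe_finset]
  congr 1
  ext a
  simp [and_comm]

lemma w_eq_nth : S.w = Nat.nth (· ∈ S.apery) := by
  funext j
  exact (Nat.nth_eq_getD_sort (p := (· ∈ S.apery)) S.apery_finite j).symm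

lemma w_zero : S.w 0 = 0 := by
  rw [w_eq_nth]
  exact Nat.nth_zero_of_zero ⟨S.zero_mem, fun u _ h => by linarith [S.mult_pos]⟩

open Classical in
lemma lt_ncard_inter_interval_iff (k : ℕ) {i : ℕ} (hi : i < S.mult) :
    i < (S.carrier ∩ interval S.mult k).ncard ↔ S.w i < (k + 1) * S.mult := by
  rw [ncard_inter_interval_eq_count, w_eq_nth]
  refine Nat.lt_count_iff_nth_lt (p := (· ∈ S.apery)) S.apery_finite ?_
  rwa [← Set.ncard_eq_toFinset_card _ S.apery_finite, ncard_apery]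

theorem le_ncard_inter_iff_general (S : NumericalSemigroup)
    (k j : ℕ) (hj2 : j ≤ S.mult - 1) :
    j ≤ (S.carrier ∩ interval S.mult k).ncard ↔ S.w (j - 1) < (k + 1) * S.mult := by
  rcases j with _ | i
  · simp [w_zero, S.mult_pos]
  · exact S.lt_ncard_inter_interval_iff k (by lia)

/-- For `k ∈ ℕ` and `j ∈ {1, ..., m-1}`, the interval `I_k` contains at
least `j` elements of `S` iff `w_{j-1} < (k+1)·m`. -/
theorem le_ncard_inter_iff (S : NumericalSemigroup)
    (k j : ℕ) (hj1 : 1 ≤ j) (hj2 : j ≤ S.mult - 1) :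
    j ≤ (S.carrier ∩ interval S.mult k).ncard ↔ S.w (j - 1) < (k + 1) * S.mult :=
  le_ncard_inter_iff_general S k j hj2

end NumericalSemigroup
end
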